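/- arXiv:1603.09464 — 6 statements merged into one kernel-verified Lean document; each statement's English description precedes it below -/
import Mathlib

section
/- Let λ₀ > 0. There exists a constant C > 0 depending only on α, β, γ, λ₀ with the following property: for every ξ ∈ ℝⁿ with |ξ| ≥ λ₀ and every pair of differentiable functions r : [0,∞) → ℂ, w : [0,∞) → ℂⁿ satisfying r'(t) + iγ ξ·w(t) = 0 and w'(t) + α|ξ|² w(t) + β ξ (ξ·w(t)) + iγ ξ r(t) = 0 for all t > 0, one has ∫_S^T ( |w(t)|² + |r(t)|² ) dt ≤ C ( |w(S)|² + |r(S)|² ) for all 0 < S < T. -/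
/-!
The energy `E = |w|² + |r|²` satisfies `E' = -2α|ξ|²|w|² - 2β|ξ·w|²`, which dissipates `w` but
not `r`. The missing dissipation comes from the cross term `Im(r̄ ξ·w)`, whose derivative contains
`-γ|ξ|²|r|²`. For a small weight `ε` (depending on `α, β, γ, λ₀`), the functional
`L = E + ε|ξ|⁻² Im(r̄ ξ·w)` is comparable to `E` (`E/2 ≤ L ≤ 3E/2`, using `ε ≤ |ξ|`) and satisfies
`L' ≤ -c E`; integrating gives `c ∫_S^T E ≤ L(S) - L(T) ≤ 3/2 E(S)`.
-/

open MeasureTheory Real Filter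

noncomputable section

abbrev Esp (n : ℕ) := EuclideanSpace ℝ (Fin n)

/-- "dot product" `ξ·w := Σⱼ ξⱼ wⱼ` (no conjugation) of a real frequency with a complex vector. -/
def cdot {n : ℕ} (ξ : Esp n) (w : Fin n → ℂ) : ℂ := ∑ j, (ξ j : ℂ) * w j

open ComplexConjugate Set

lemma two_mul_abs_le_add_of_sq_le_mul {x a b : ℝ} (ha : 0 ≤ a) (hb : 0 ≤ b) (h : x ^ 2 ≤ a * b) :
    2 * |x| ≤ a + b := by
  nlinarith [sq_abs x, abs_nonneg x, sq_nonneg (a - b)]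

lemma norm_cdot_sq_le {n : ℕ} (ξ : Esp n) (v : Fin n → ℂ) :
    ‖cdot ξ v‖ ^ 2 ≤ ‖ξ‖ ^ 2 * ∑ j, ‖v j‖ ^ 2 := by
  have h : ‖cdot ξ v‖ ≤ ∑ j, |ξ j| * ‖v j‖ :=
    (norm_sum_le _ _).trans_eq (by simp [Complex.norm_real])
  calc ‖cdot ξ v‖ ^ 2 ≤ (∑ j, |ξ j| * ‖v j‖) ^ 2 := by gcongr
    _ ≤ (∑ j, |ξ j| ^ 2) * ∑ j, ‖v j‖ ^ 2 := Finset.sum_mul_sq_le_sq_mul_sq _ _ _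
    _ = ‖ξ‖ ^ 2 * ∑ j, ‖v j‖ ^ 2 := by simp [EuclideanSpace.real_norm_sq_eq]

lemma im_conj_mul_sq_le (r z : ℂ) : (conj r * z).im ^ 2 ≤ ‖r‖ ^ 2 * ‖z‖ ^ 2 := by
  rw [← mul_pow, ← Complex.norm_conj r, ← norm_mul, ← Complex.sq_norm_sub_sq_re]
  nlinarith [sq_nonneg (conj r * z).re]

lemma abs_div_mul_le_half_add {ε l W R P : ℝ} (hl : 0 < l) (hε : 0 ≤ ε) (hεl : ε ≤ l)
    (hW : 0 ≤ W) (hR : 0 ≤ R) (hP : P ^ 2 ≤ R * (l ^ 2 * W)) :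
    |ε / l ^ 2 * P| ≤ (W + R) / 2 := by
  have h : (ε / l ^ 2 * P) ^ 2 ≤ W * R := by
    have hεl' : (ε / l) ^ 2 ≤ 1 := pow_le_one₀ (by positivity) ((div_le_one hl).2 hεl)
    calc (ε / l ^ 2 * P) ^ 2 = (ε / l) ^ 2 * (P ^ 2 / l ^ 2) := by field_simp
      _ ≤ 1 * (W * R) := by
        gcongr
        rw [div_le_iff₀ (by positivity)]
        linarith
      _ = W * R := one_mul _
  linarith [two_mul_abs_le_add_of_sq_le_mul hW hR h]

lemma lyapunov_dissipation_le {α β γ ε l W R Z P : ℝ} (hβ : 0 ≤ β) (hγ : 0 < γ)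
    (hl : 0 < l) (hε : 0 ≤ ε) (hεγ : 2 * ε * γ ≤ α * l ^ 2) (hεαβ : ε * (α + β) ^ 2 ≤ α * γ)
    (hW : 0 ≤ W) (hR : 0 ≤ R) (hZ : 0 ≤ Z) (hZW : Z ≤ l ^ 2 * W) (hP : P ^ 2 ≤ R * Z) :
    -(2 * α * l ^ 2 * W + 2 * β * Z) + ε / l ^ 2 * (γ * Z - (α + β) * l ^ 2 * P - γ * l ^ 2 * R)
      ≤ -(α * l ^ 2 * W + ε * γ / 2 * R) := by
  have hZ' : ε / l ^ 2 * (γ * Z) ≤ ε * γ * W := by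
    rw [div_mul_eq_mul_div, div_le_iff₀ (by positivity)]
    nlinarith [mul_le_mul_of_nonneg_left hZW (mul_nonneg hε hγ.le)]
  have hamgm : 2 * |γ * (α + β) * P| ≤ γ ^ 2 * R + (α + β) ^ 2 * l ^ 2 * W := by
    refine two_mul_abs_le_add_of_sq_le_mul (by positivity) (by positivity) ?_
    nlinarith [mul_le_mul_of_nonneg_left (hP.trans (mul_le_mul_of_nonneg_left hZW hR))
      (by positivity : 0 ≤ γ ^ 2 * (α + β) ^ 2)]
  have hcross : -(ε * ((α + β) * P)) ≤ ε * γ / 2 * R + α * l ^ 2 * W / 2 := by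
    refine le_of_mul_le_mul_left ?_ hγ
    have habs := neg_abs_le (γ * (α + β) * P)
    have hεW := mul_le_mul_of_nonneg_right hεαβ (by positivity : 0 ≤ l ^ 2 * W)
    nlinarith [mul_le_mul_of_nonneg_left hamgm hε]
  have hεW : ε * γ * W ≤ α * l ^ 2 * W / 2 := by nlinarith
  have hexpand : ε / l ^ 2 * (γ * Z - (α + β) * l ^ 2 * P - γ * l ^ 2 * R)
      = ε / l ^ 2 * (γ * Z) - ε * ((α + β) * P) - ε * γ * R := by
    field_simp
  linarith [mul_nonneg hβ hZ]

lemma mul_integral_le_sub_of_hasDerivAt_le {E L : ℝ → ℝ} {a b c : ℝ} (hab : a ≤ b)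
    (hE : ContinuousOn E (Icc a b)) (hL : ∀ t ∈ Icc a b, ∃ L', HasDerivAt L L' t ∧ L' ≤ -c * E t) :
    c * ∫ t in a..b, E t ≤ L a - L b := by
  choose! L' hL'L hL'le using hL
  rw [← intervalIntegral.integral_const_mul]
  have h := intervalIntegral.integral_le_sub_of_hasDeriv_right_of_le (g := fun t => -L t)
    (φ := fun t => c * E t) hab
    (fun t ht => (hL'L t ht).continuousAt.neg.continuousWithinAt)
    (fun t ht => (hL'L t (Ioo_subset_Icc_self ht)).neg.hasDerivWithinAt)
    (hE.const_smul c).integrableOn_Icc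
    (fun t ht => by linarith [hL'le t (Ioo_subset_Icc_self ht)])
  linarith

namespace LinearizedSystem

variable {n : ℕ}

def energy (r : ℂ) (w : Fin n → ℂ) : ℝ := ∑ j, ‖w j‖ ^ 2 + ‖r‖ ^ 2

def lyapunov (ε : ℝ) (ξ : Esp n) (r : ℂ) (w : Fin n → ℂ) : ℝ :=
  energy r w + ε / ‖ξ‖ ^ 2 * (conj r * cdot ξ w).im

def IsSolutionAt (α β γ : ℝ) (ξ : Esp n) (r : ℝ → ℂ) (w : ℝ → Fin n → ℂ) (t : ℝ) : Prop :=
  HasDerivAt r (-(Complex.I * (γ : ℂ) * cdot ξ (w t))) t ∧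
    ∀ j, HasDerivAt (fun s => w s j)
      (-((α : ℂ) * ((‖ξ‖ ^ 2 : ℝ) : ℂ) * w t j + (β : ℂ) * (ξ j : ℂ) * cdot ξ (w t)
        + Complex.I * (γ : ℂ) * (ξ j : ℂ) * r t)) t

lemma energy_nonneg (r : ℂ) (w : Fin n → ℂ) : 0 ≤ energy r w := by
  unfold energy; positivity

lemma abs_lyapunov_sub_energy_le {ε : ℝ} {ξ : Esp n} (hξ : 0 < ‖ξ‖) (hε : 0 ≤ ε) (hεξ : ε ≤ ‖ξ‖)
    (r : ℂ) (w : Fin n → ℂ) : |lyapunov ε ξ r w - energy r w| ≤ energy r w / 2 := by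
  rw [lyapunov, add_sub_cancel_left, energy]
  refine abs_div_mul_le_half_add hξ hε hεξ (by positivity) (by positivity) ?_
  calc (conj r * cdot ξ w).im ^ 2 ≤ ‖r‖ ^ 2 * ‖cdot ξ w‖ ^ 2 := im_conj_mul_sq_le _ _
    _ ≤ ‖r‖ ^ 2 * (‖ξ‖ ^ 2 * ∑ j, ‖w j‖ ^ 2) := by gcongr; exact norm_cdot_sq_le ξ w

variable {α β γ : ℝ} {ξ : Esp n} {r : ℝ → ℂ} {w : ℝ → Fin n → ℂ} {t : ℝ}

lemma IsSolutionAt.hasDerivAt_cdot (h : IsSolutionAt α β γ ξ r w t) :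
    HasDerivAt (fun s => cdot ξ (w s))
      (-(((α + β) * ‖ξ‖ ^ 2 : ℝ) * cdot ξ (w t) + Complex.I * γ * (‖ξ‖ ^ 2 : ℝ) * r t)) t := by
  refine (HasDerivAt.fun_sum fun j _ => (h.2 j).const_mul (ξ j : ℂ)).congr_deriv ?_
  set z := cdot ξ (w t)
  calc _ = ∑ j, (-(α * (‖ξ‖ ^ 2 : ℝ) : ℂ) * ((ξ j : ℂ) * w t j)
        + -(β * z + Complex.I * γ * r t) * (ξ j : ℂ) ^ 2) := Finset.sum_congr rfl fun j _ => by ring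
    _ = -(α * (‖ξ‖ ^ 2 : ℝ) : ℂ) * z + -(β * z + Complex.I * γ * r t) * ∑ j, (ξ j : ℂ) ^ 2 := by
      rw [Finset.sum_add_distrib, ← Finset.mul_sum, ← Finset.mul_sum]; rfl
    _ = _ := by
      have hξ : ∑ j, (ξ j : ℂ) ^ 2 = ((‖ξ‖ ^ 2 : ℝ) : ℂ) := by
        simp [EuclideanSpace.real_norm_sq_eq]
      rw [hξ]; push_cast; ring

lemma IsSolutionAt.hasDerivAt_energy (h : IsSolutionAt α β γ ξ r w t) :
    HasDerivAt (fun s => energy (r s) (w s))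
      (-(2 * α * ‖ξ‖ ^ 2 * ∑ j, ‖w t j‖ ^ 2 + 2 * β * ‖cdot ξ (w t)‖ ^ 2)) t := by
  refine ((HasDerivAt.fun_sum fun j _ => (h.2 j).norm_sq).add h.1.norm_sq).congr_deriv ?_
  set z := cdot ξ (w t)
  have hsum : ∑ j, -((α : ℂ) * ((‖ξ‖ ^ 2 : ℝ) : ℂ) * w t j + (β : ℂ) * (ξ j : ℂ) * z
        + Complex.I * (γ : ℂ) * (ξ j : ℂ) * r t) * conj (w t j)
      = -((α : ℂ) * ((‖ξ‖ ^ 2 : ℝ) : ℂ) * ((∑ j, ‖w t j‖ ^ 2 : ℝ) : ℂ)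
        + (β * z + Complex.I * γ * r t) * conj z) := by
    calc _ = ∑ j, (-((α : ℂ) * ((‖ξ‖ ^ 2 : ℝ) : ℂ)) * (w t j * conj (w t j))
          + -(β * z + Complex.I * γ * r t) * ((ξ j : ℂ) * conj (w t j))) :=
          Finset.sum_congr rfl fun j _ => by ring
      _ = _ := by
        rw [Finset.sum_add_distrib, ← Finset.mul_sum, ← Finset.mul_sum]
        simp only [Complex.mul_conj', z, cdot, map_sum, map_mul, Complex.conj_ofReal]
        push_cast; ring
  simp only [Complex.inner]
  rw [← Finset.mul_sum, ← Complex.re_sum, hsum, Complex.sq_norm]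
  simp only [Complex.normSq_apply, Complex.neg_re, Complex.neg_im, Complex.add_re,
    Complex.add_im, Complex.mul_re, Complex.mul_im, Complex.ofReal_re, Complex.ofReal_im, Complex.I_re, Complex.I_im, Complex.conj_re,
    Complex.conj_im]
  ring

lemma IsSolutionAt.hasDerivAt_im_conj_mul_cdot (h : IsSolutionAt α β γ ξ r w t) :
    HasDerivAt (fun s => (conj (r s) * cdot ξ (w s)).im)
      (γ * ‖cdot ξ (w t)‖ ^ 2 - (α + β) * ‖ξ‖ ^ 2 * (conj (r t) * cdot ξ (w t)).im
        - γ * ‖ξ‖ ^ 2 * ‖r t‖ ^ 2) t := by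
  refine (Complex.imCLM.hasFDerivAt.comp_hasDerivAt t
    (h.1.star.mul h.hasDerivAt_cdot)).congr_deriv ?_
  simp only [Complex.imCLM_apply, Complex.star_def, Complex.sq_norm,
    Complex.normSq_apply, map_neg, map_mul, Complex.conj_I, Complex.conj_ofReal, Complex.neg_re,
    Complex.neg_im, Complex.add_re, Complex.add_im, Complex.mul_re, Complex.mul_im,
    Complex.ofReal_re, Complex.ofReal_im, Complex.I_re, Complex.I_im, Complex.conj_re,
    Complex.conj_im]
  ring

lemma IsSolutionAt.exists_hasDerivAt_lyapunov_le {ε : ℝ} (hβ : 0 ≤ β) (hγ : 0 < γ)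
    (hξ : 0 < ‖ξ‖) (hε : 0 ≤ ε) (hεγ : 2 * ε * γ ≤ α * ‖ξ‖ ^ 2)
    (hεαβ : ε * (α + β) ^ 2 ≤ α * γ) (h : IsSolutionAt α β γ ξ r w t) :
    ∃ L', HasDerivAt (fun s => lyapunov ε ξ (r s) (w s)) L' t ∧
      L' ≤ -(α * ‖ξ‖ ^ 2 * ∑ j, ‖w t j‖ ^ 2 + ε * γ / 2 * ‖r t‖ ^ 2) :=
  ⟨_, h.hasDerivAt_energy.add (h.hasDerivAt_im_conj_mul_cdot.const_mul _),
    lyapunov_dissipation_le hβ hγ hξ hε hεγ hεαβ (by positivity) (by positivity) (by positivity)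
      (norm_cdot_sq_le ξ (w t)) (im_conj_mul_sq_le (r t) (cdot ξ (w t)))⟩

lemma mul_integral_energy_le {ε c S T : ℝ} (hβ : 0 ≤ β) (hγ : 0 < γ) (hξ : 0 < ‖ξ‖)
    (hε : 0 ≤ ε) (hεξ : ε ≤ ‖ξ‖) (hεγ : 2 * ε * γ ≤ α * ‖ξ‖ ^ 2) (hεαβ : ε * (α + β) ^ 2 ≤ α * γ)
    (hcα : c ≤ α * ‖ξ‖ ^ 2) (hcε : c ≤ ε * γ / 2) (hST : S ≤ T)
    (hsol : ∀ t ∈ Icc S T, IsSolutionAt α β γ ξ r w t) :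
    c * ∫ t in S..T, energy (r t) (w t) ≤ 3 / 2 * energy (r S) (w S) := by
  have hdecay : ∀ t ∈ Icc S T, ∃ L', HasDerivAt (fun s => lyapunov ε ξ (r s) (w s)) L' t ∧
      L' ≤ -c * energy (r t) (w t) := by
    intro t ht
    obtain ⟨L', hL', hle⟩ := (hsol t ht).exists_hasDerivAt_lyapunov_le hβ hγ hξ hε hεγ hεαβ
    refine ⟨L', hL', hle.trans ?_⟩
    unfold energy
    linarith [mul_le_mul_of_nonneg_right hcα (by positivity : 0 ≤ ∑ j, ‖w t j‖ ^ 2),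
      mul_le_mul_of_nonneg_right hcε (by positivity : 0 ≤ ‖r t‖ ^ 2)]
  have hint := mul_integral_le_sub_of_hasDerivAt_le hST
    (fun t ht => (hsol t ht).hasDerivAt_energy.continuousAt.continuousWithinAt) hdecay
  have hLS := abs_le.1 (abs_lyapunov_sub_energy_le hξ hε hεξ (r S) (w S))
  have hLT := abs_le.1 (abs_lyapunov_sub_energy_le hξ hε hεξ (r T) (w T))
  linarith [energy_nonneg (r T) (w T)]

end LinearizedSystem

lemma exists_lyapunov_weight (α β γ lam0 : ℝ) (hα : 0 < α) (hβ : 0 ≤ β) (hγ : 0 < γ)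
    (hlam0 : 0 < lam0) :
    ∃ ε > 0, ε ≤ lam0 ∧ 2 * ε * γ ≤ α * lam0 ^ 2 ∧ ε * (α + β) ^ 2 ≤ α * γ := by
  have hαβ : 0 < α + β := by linarith
  refine ⟨min lam0 (min (α * lam0 ^ 2 / (2 * γ)) (α * γ / (α + β) ^ 2)),
    lt_min hlam0 (lt_min (by positivity) (by positivity)), min_le_left _ _, ?_, ?_⟩
  · rw [mul_comm 2, mul_assoc, ← le_div_iff₀ (by positivity)]
    exact (min_le_right _ _).trans (min_le_left _ _)
  · rw [← le_div_iff₀ (by positivity)]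
    exact (min_le_right _ _).trans (min_le_right _ _)

open LinearizedSystem in
theorem stmt8_general
    (n : ℕ) (α β γ : ℝ) (hα : 0 < α) (hβ : 0 ≤ β) (hγ : 0 < γ)
    (lam0 : ℝ) (hlam0 : 0 < lam0) :
    ∃ C > (0 : ℝ), ∀ ξ : Esp n, lam0 ≤ ‖ξ‖ →
      ∀ (r : ℝ → ℂ) (w : ℝ → Fin n → ℂ),
        (∀ t : ℝ, 0 < t →
          HasDerivAt r (-(Complex.I * (γ : ℂ) * cdot ξ (w t))) t) →
        (∀ t : ℝ, 0 < t → ∀ j, HasDerivAt (fun s => w s j)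
          (-((α : ℂ) * ((‖ξ‖ ^ 2 : ℝ) : ℂ) * w t j
             + (β : ℂ) * (ξ j : ℂ) * cdot ξ (w t)
             + Complex.I * (γ : ℂ) * (ξ j : ℂ) * r t)) t) →
        ∀ S T : ℝ, 0 < S → S < T →
          (∫ t in S..T, ((∑ j, ‖w t j‖ ^ 2) + ‖r t‖ ^ 2))
            ≤ C * ((∑ j, ‖w S j‖ ^ 2) + ‖r S‖ ^ 2) := by
  obtain ⟨ε, hε, hεlam, hεγ, hεαβ⟩ := exists_lyapunov_weight α β γ lam0 hα hβ hγ hlam0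
  set c := min (α * lam0 ^ 2) (ε * γ / 2)
  have hc : 0 < c := lt_min (by positivity) (by positivity)
  refine ⟨3 / (2 * c), by positivity, fun ξ hξ r w hr hw S T hS hST => ?_⟩
  have hξ0 : 0 < ‖ξ‖ := hlam0.trans_le hξ
  have hint := mul_integral_energy_le (c := c) hβ hγ hξ0 hε.le (hεlam.trans hξ)
    (hεγ.trans (by gcongr)) hεαβ ((min_le_left _ _).trans (by gcongr)) (min_le_right _ _) hST.le
    fun t ht => ⟨hr t (hS.trans_le ht.1), hw t (hS.trans_le ht.1)⟩
  change ∫ t in S..T, energy (r t) (w t) ≤ 3 / (2 * c) * energy (r S) (w S)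
  rw [div_mul_eq_mul_div, le_div_iff₀ (by positivity)]
  linarith

/-- uniform-in-frequency integrability estimate in the high-frequency zone
`|ξ| ≥ lam0`; the constant `C` depends only on `α, β, γ, lam0`. -/
theorem stmt8
    (n : ℕ) (hn : 2 ≤ n) (α β γ : ℝ) (hα : 0 < α) (hβ : 0 ≤ β) (hγ : 0 < γ)
    (lam0 : ℝ) (hlam0 : 0 < lam0) :
    ∃ C > (0 : ℝ), ∀ ξ : Esp n, lam0 ≤ ‖ξ‖ →
      ∀ (r : ℝ → ℂ) (w : ℝ → Fin n → ℂ),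
        (∀ t : ℝ, 0 < t →
          HasDerivAt r (-(Complex.I * (γ : ℂ) * cdot ξ (w t))) t) →
        (∀ t : ℝ, 0 < t → ∀ j, HasDerivAt (fun s => w s j)
          (-((α : ℂ) * ((‖ξ‖ ^ 2 : ℝ) : ℂ) * w t j
             + (β : ℂ) * (ξ j : ℂ) * cdot ξ (w t)
             + Complex.I * (γ : ℂ) * (ξ j : ℂ) * r t)) t) →
        ∀ S T : ℝ, 0 < S → S < T →
          (∫ t in S..T, ((∑ j, ‖w t j‖ ^ 2) + ‖r t‖ ^ 2))
            ≤ C * ((∑ j, ‖w S j‖ ^ 2) + ‖r S‖ ^ 2) :=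
  stmt8_general n α β γ hα hβ hγ lam0 hlam0
end
end

section
/- Let E : [0,∞) → [0,∞) be a non-increasing function and suppose there exists T₀ > 0 such that ∫_S^∞ E(t) dt ≤ T₀ E(S) for all S ≥ 0. Then E(t) ≤ E(0) e^{1 − t/T₀} for all t ≥ T₀. -/
/-!
Write `I S = ∫_S^∞ E`. Since `E` is non-increasing, `I S ≥ c E(S + c) + I (S + c)`, and the
hypothesis `I (S + c) ≤ T₀ E(S + c)` turns this into `I (S + c) (1 + c / T₀) ≤ I S`. Iterating with
step `c = t / n` and letting `n → ∞` gives `I t e^{t / T₀} ≤ I 0 ≤ T₀ E(0)`, while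
`T₀ E(t) ≤ I (t - T₀)` by monotonicity again.
-/

open MeasureTheory Real Filter Topology Set

theorem AntitoneOn.sub_mul_le_intervalIntegral {E : ℝ → ℝ} {a b : ℝ} (hab : a ≤ b)
    (hE : AntitoneOn E (Icc a b)) : (b - a) * E b ≤ ∫ x in a..b, E x :=
  calc (b - a) * E b = ∫ _ in a..b, E b := by
        rw [intervalIntegral.integral_const, smul_eq_mul]
    _ ≤ ∫ x in a..b, E x :=
      intervalIntegral.integral_mono_on hab intervalIntegrable_const
        ((hE.mono (uIcc_of_le hab).le).intervalIntegrable)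
        fun _ hx => hE hx (right_mem_Icc.2 hab) hx.2

theorem AntitoneOn.sub_mul_add_integral_Ioi_le {E : ℝ → ℝ} {a b : ℝ} (hab : a ≤ b)
    (hE : AntitoneOn E (Icc a b)) (ha : IntegrableOn E (Ioi a)) :
    (b - a) * E b + ∫ x in Ioi b, E x ≤ ∫ x in Ioi a, E x := by
  rw [← intervalIntegral.integral_interval_add_Ioi ha (ha.mono_set (Ioi_subset_Ioi hab))]
  gcongr
  exact hE.sub_mul_le_intervalIntegral hab

theorem AntitoneOn.integral_Ioi_mul_one_add_le {E : ℝ → ℝ} {T a b : ℝ} (hT : 0 < T)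
    (hab : a ≤ b) (hE : AntitoneOn E (Icc a b)) (ha : IntegrableOn E (Ioi a))
    (hb : ∫ x in Ioi b, E x ≤ T * E b) :
    (∫ x in Ioi b, E x) * (1 + T⁻¹ * (b - a)) ≤ ∫ x in Ioi a, E x := by
  have hb' : T⁻¹ * ∫ x in Ioi b, E x ≤ E b := by rwa [inv_mul_le_iff₀ hT]
  calc (∫ x in Ioi b, E x) * (1 + T⁻¹ * (b - a))
      = (b - a) * (T⁻¹ * ∫ x in Ioi b, E x) + ∫ x in Ioi b, E x := by ring
    _ ≤ (b - a) * E b + ∫ x in Ioi b, E x := by gcongr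
    _ ≤ ∫ x in Ioi a, E x := hE.sub_mul_add_integral_Ioi_le hab ha

section DiscreteGronwall

variable {h : ℝ → ℝ} {r : ℝ}

theorem mul_one_add_pow_le_of_mul_one_add_le (hr : 0 ≤ r)
    (hstep : ∀ S c, 0 ≤ S → 0 ≤ c → h (S + c) * (1 + r * c) ≤ h S) {c : ℝ} (hc : 0 ≤ c) :
    ∀ n : ℕ, h (n * c) * (1 + r * c) ^ n ≤ h 0
  | 0 => by simp
  | n + 1 =>
    calc h ((n + 1 : ℕ) * c) * (1 + r * c) ^ (n + 1)
        = h (n * c + c) * (1 + r * c) * (1 + r * c) ^ n := by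
          rw [Nat.cast_succ, add_one_mul, pow_succ]; ring
      _ ≤ h (n * c) * (1 + r * c) ^ n := by gcongr; exact hstep _ _ (by positivity) hc
      _ ≤ h 0 := mul_one_add_pow_le_of_mul_one_add_le hr hstep hc n

theorem mul_exp_le_of_mul_one_add_le (hr : 0 ≤ r)
    (hstep : ∀ S c, 0 ≤ S → 0 ≤ c → h (S + c) * (1 + r * c) ≤ h S) {t : ℝ} (ht : 0 ≤ t) :
    h t * exp (r * t) ≤ h 0 := by
  have hlim : Tendsto (fun n : ℕ => h t * (1 + r * t / n) ^ n) atTop (𝓝 (h t * exp (r * t))) :=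
    (tendsto_one_add_div_pow_exp (r * t)).const_mul _
  refine le_of_tendsto hlim ((eventually_ne_atTop 0).mono fun n hn => ?_)
  have := mul_one_add_pow_le_of_mul_one_add_le hr hstep (div_nonneg ht n.cast_nonneg) n
  rwa [mul_div_cancel₀ _ (Nat.cast_ne_zero.2 hn), ← mul_div_assoc] at this

end DiscreteGronwall

/-- the Haraux–Komornik lemma. `E : [0,∞) → [0,∞)` is non-increasing,
integrable on every `(S,∞)`, and `∫_S^∞ E ≤ T₀ E(S)` for all `S ≥ 0`; then
`E(t) ≤ E(0) e^{1-t/T₀}` for `t ≥ T₀`. -/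
theorem stmt10
    (E : ℝ → ℝ) (T₀ : ℝ) (hT₀ : 0 < T₀)
    (hnonneg : ∀ t : ℝ, 0 ≤ t → 0 ≤ E t)
    (hmono : AntitoneOn E (Set.Ici (0 : ℝ)))
    (hint : ∀ S : ℝ, 0 ≤ S → IntegrableOn E (Set.Ioi S))
    (hbound : ∀ S : ℝ, 0 ≤ S → (∫ t in Set.Ioi S, E t) ≤ T₀ * E S) :
    ∀ t : ℝ, T₀ ≤ t → E t ≤ E 0 * Real.exp (1 - t / T₀) := by
  intro t ht
  have hmonoIcc : ∀ {a b : ℝ}, 0 ≤ a → AntitoneOn E (Icc a b) :=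
    fun ha => hmono.mono fun _ hx => ha.trans hx.1
  have hS : 0 ≤ t - T₀ := sub_nonneg.2 ht
  have hdecay : (∫ x in Ioi (t - T₀), E x) * exp (T₀⁻¹ * (t - T₀)) ≤ ∫ x in Ioi 0, E x :=
    mul_exp_le_of_mul_one_add_le (h := fun S => ∫ x in Ioi S, E x) (inv_nonneg.2 hT₀.le)
      (fun S c hS hc => by
        simpa using (hmonoIcc hS).integral_Ioi_mul_one_add_le hT₀ (le_add_of_nonneg_right hc)
          (hint S hS) (hbound _ (add_nonneg hS hc)))
      hS
  have hlower : T₀ * E t + ∫ x in Ioi t, E x ≤ ∫ x in Ioi (t - T₀), E x := by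
    simpa only [sub_sub_cancel] using
      (hmonoIcc hS).sub_mul_add_integral_Ioi_le (sub_le_self t hT₀.le) (hint _ hS)
  have htail : 0 ≤ ∫ x in Ioi t, E x :=
    setIntegral_nonneg measurableSet_Ioi fun x hx => hnonneg x (hT₀.le.trans (ht.trans hx.out.le))
  have hexp : exp (1 - t / T₀) = (exp (T₀⁻¹ * (t - T₀)))⁻¹ := by
    rw [← exp_neg]; congr 1; field_simp; ring
  rw [hexp, ← div_eq_mul_inv, le_div_iff₀ (exp_pos _)]
  refine le_of_mul_le_mul_left ?_ hT₀
  calc T₀ * (E t * exp (T₀⁻¹ * (t - T₀)))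
      ≤ (∫ x in Ioi (t - T₀), E x) * exp (T₀⁻¹ * (t - T₀)) := by
        rw [← mul_assoc]; gcongr; linarith
    _ ≤ T₀ * E 0 := hdecay.trans (hbound 0 le_rfl)
end

section
/- Let n ≥ 1, α > 0 and P₀ ∈ ℝⁿ. Then there exist a constant C₁ > 0 (depending only on n and α) and T > 0 such that for all t ≥ T: C₁² |P₀|² t^{−n/2} ≤ ∫_{ℝⁿ} ( |ξ·P₀|² / |ξ|² ) e^{−2α|ξ|²t} dξ ≤ C₁^{−2} |P₀|² t^{−n/2}. -/
/-!
The integral can be computed exactly. Lebesgue measure is invariant under the reflection carrying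
`v` to any `w` with `‖w‖ = ‖v‖`, so `∫ ⟪v, ξ⟫² / ‖ξ‖² f(‖ξ‖) dξ` depends only on `‖v‖`. Summing it
over an orthonormal basis and using `∑ᵢ ⟪bᵢ, ξ⟫² = ‖ξ‖²` gives `‖v‖² (∫ f(‖ξ‖) dξ) / n`. For the
Gaussian `f(r) = exp(-c r²)` with `c = 2αt` this is `‖P₀‖² (π / 2α)^{n/2} / n · t^{-n/2}`.
-/

open MeasureTheory Real Filter

noncomputable section

open scoped RealInnerProductSpace

section
variable {V : Type*} [NormedAddCommGroup V] [InnerProductSpace ℝ V]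

lemma inner_sq_div_norm_sq_le (v ξ : V) : ⟪v, ξ⟫ ^ 2 / ‖ξ‖ ^ 2 ≤ ‖v‖ ^ 2 := by
  refine div_le_of_le_mul₀ (by positivity) (by positivity) ?_
  rw [← mul_pow, ← sq_abs]
  exact pow_le_pow_left₀ (abs_nonneg _) (abs_real_inner_le_norm v ξ) 2

variable [FiniteDimensional ℝ V] [MeasurableSpace V] [BorelSpace V]

lemma integrable_inner_sq_div_norm_sq_mul {f : V → ℝ} (hf : Integrable f) (v : V) :
    Integrable (fun ξ => ⟪v, ξ⟫ ^ 2 / ‖ξ‖ ^ 2 * f ξ) :=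
  hf.bdd_mul (Measurable.aestronglyMeasurable (by fun_prop)) <| .of_forall fun ξ => by
    rw [Real.norm_of_nonneg (by positivity)]
    exact inner_sq_div_norm_sq_le v ξ

lemma integral_inner_sq_div_norm_sq_mul_eq_of_norm_eq {v w : V} (h : ‖v‖ = ‖w‖) (f : ℝ → ℝ) :
    ∫ ξ, ⟪v, ξ⟫ ^ 2 / ‖ξ‖ ^ 2 * f ‖ξ‖ = ∫ ξ, ⟪w, ξ⟫ ^ 2 / ‖ξ‖ ^ 2 * f ‖ξ‖ := by
  set R := Submodule.reflection (ℝ ∙ (v - w))ᗮ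
  have hR : R v = w := Submodule.reflection_sub h
  rw [← R.measurePreserving.integral_comp R.toHomeomorph.measurableEmbedding
    (fun ξ => ⟪w, ξ⟫ ^ 2 / ‖ξ‖ ^ 2 * f ‖ξ‖)]
  congr 1 with ξ
  rw [← hR]
  simp only [LinearIsometryEquiv.inner_map_map, LinearIsometryEquiv.norm_map]

lemma sum_integral_inner_sq_div_norm_sq_mul [Nontrivial V] {ι : Type*} [Fintype ι]
    (b : OrthonormalBasis ι ℝ V) {f : ℝ → ℝ} (hf : Integrable fun ξ : V => f ‖ξ‖) :
    ∑ i, ∫ ξ, ⟪b i, ξ⟫ ^ 2 / ‖ξ‖ ^ 2 * f ‖ξ‖ = ∫ ξ : V, f ‖ξ‖ := by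
  rw [← integral_finsetSum _ fun i _ => integrable_inner_sq_div_norm_sq_mul hf (b i)]
  have h0 : volume ({0} : Set V) = 0 := measure_singleton 0
  refine integral_congr_ae ?_
  filter_upwards [compl_mem_ae_iff.2 h0] with ξ hξ
  have : ‖ξ‖ ≠ 0 := by simpa using hξ
  rw [← Finset.sum_mul, ← Finset.sum_div, b.sum_sq_inner_right, div_self (by positivity), one_mul]

lemma integral_inner_sq_div_norm_sq_mul [Nontrivial V] {f : ℝ → ℝ}
    (hf : Integrable fun ξ : V => f ‖ξ‖) (v : V) :
    ∫ ξ, ⟪v, ξ⟫ ^ 2 / ‖ξ‖ ^ 2 * f ‖ξ‖ = ‖v‖ ^ 2 * (∫ ξ : V, f ‖ξ‖) / Module.finrank ℝ V := by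
  set b := stdOrthonormalBasis ℝ V
  let i₀ : Fin (Module.finrank ℝ V) := ⟨0, Module.finrank_pos⟩
  have hb : ∀ i, ∫ ξ, ⟪b i, ξ⟫ ^ 2 / ‖ξ‖ ^ 2 * f ‖ξ‖ = ∫ ξ, ⟪b i₀, ξ⟫ ^ 2 / ‖ξ‖ ^ 2 * f ‖ξ‖ :=
    fun i => integral_inner_sq_div_norm_sq_mul_eq_of_norm_eq (by simp) f
  have hsum := sum_integral_inner_sq_div_norm_sq_mul b hf
  simp only [hb, Finset.sum_const, Finset.card_univ, Fintype.card_fin, nsmul_eq_mul] at hsum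
  have hv : ‖v‖ = ‖‖v‖ • b i₀‖ := by rw [norm_smul, norm_norm, b.norm_eq_one, mul_one]
  have hn : (Module.finrank ℝ V : ℝ) ≠ 0 := by
    have := Module.finrank_pos (R := ℝ) (M := V)
    positivity
  calc ∫ ξ, ⟪v, ξ⟫ ^ 2 / ‖ξ‖ ^ 2 * f ‖ξ‖
      = ∫ ξ, ‖v‖ ^ 2 * (⟪b i₀, ξ⟫ ^ 2 / ‖ξ‖ ^ 2 * f ‖ξ‖) := by
        rw [integral_inner_sq_div_norm_sq_mul_eq_of_norm_eq hv]
        congr 1 with ξ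
        rw [real_inner_smul_left]
        ring
    _ = ‖v‖ ^ 2 * (∫ ξ : V, f ‖ξ‖) / Module.finrank ℝ V := by
        rw [integral_const_mul, ← hsum]
        field_simp

lemma integral_inner_sq_div_norm_sq_mul_exp [Nontrivial V] {c : ℝ} (hc : 0 < c) (v : V) :
    ∫ ξ, ⟪v, ξ⟫ ^ 2 / ‖ξ‖ ^ 2 * rexp (-c * ‖ξ‖ ^ 2)
      = ‖v‖ ^ 2 * (π / c) ^ (Module.finrank ℝ V / 2 : ℝ) / Module.finrank ℝ V := by
  have hgauss := GaussianFourier.integral_rexp_neg_mul_sq_norm (V := V) hc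
  have hint : Integrable fun ξ : V => rexp (-c * ‖ξ‖ ^ 2) :=
    .of_integral_ne_zero (by rw [hgauss]; positivity)
  rw [integral_inner_sq_div_norm_sq_mul (f := fun r => rexp (-c * r ^ 2)) hint v, hgauss]

end

lemma exists_pos_sq_le_and_le_inv_sq {K : ℝ} (hK : 0 < K) : ∃ C > 0, C ^ 2 ≤ K ∧ K ≤ C⁻¹ ^ 2 := by
  refine ⟨√K / (1 + K), by positivity, ?_, ?_⟩
  · rw [div_pow, sq_sqrt hK.le]
    exact div_le_self hK.le (by nlinarith)
  · rw [inv_div, div_pow, sq_sqrt hK.le, le_div_iff₀ hK]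
    nlinarith

lemma integral_dotProduct_sq_div_norm_sq_mul_exp {n : ℕ} (hn : 1 ≤ n) {α t : ℝ} (hα : 0 < α)
    (ht : 0 < t) (P : Esp n) :
    ∫ ξ : Esp n, ((∑ j, ξ j * P j) ^ 2 / ‖ξ‖ ^ 2) * rexp (-(2 * α * ‖ξ‖ ^ 2 * t))
      = (π / (2 * α)) ^ ((n : ℝ) / 2) / n * (‖P‖ ^ 2 * t ^ (-(n : ℝ) / 2)) := by
  have : Nontrivial (Esp n) :=
    Module.nontrivial_of_finrank_pos (R := ℝ) (by rw [finrank_euclideanSpace_fin]; exact hn)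
  have hdot : ∀ ξ : Esp n, ∑ j, ξ j * P j = ⟪P, ξ⟫ := fun ξ => by
    simp [PiLp.inner_apply, mul_comm]
  have hexp : ∀ ξ : Esp n, -(2 * α * ‖ξ‖ ^ 2 * t) = -(2 * α * t) * ‖ξ‖ ^ 2 := fun ξ => by ring
  simp only [hdot, hexp]
  rw [integral_inner_sq_div_norm_sq_mul_exp (by positivity), finrank_euclideanSpace_fin,
    ← div_div, div_rpow (by positivity) ht.le, neg_div, rpow_neg ht.le]
  ring

/-- two-sided bound of order `t^{-n/2}` for
`∫ (|ξ·P₀|²/|ξ|²) e^{-2α|ξ|²t} dξ`. -/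
theorem stmt11
    (n : ℕ) (hn : 1 ≤ n) (α : ℝ) (hα : 0 < α) (P₀ : Esp n) :
    ∃ C₁ > (0 : ℝ), ∃ T > (0 : ℝ), ∀ t : ℝ, T ≤ t →
      C₁ ^ 2 * ‖P₀‖ ^ 2 * t ^ (-(n : ℝ) / 2)
        ≤ (∫ ξ : Esp n, ((∑ j, ξ j * P₀ j) ^ 2 / ‖ξ‖ ^ 2)
            * Real.exp (-(2 * α * ‖ξ‖ ^ 2 * t)))
      ∧ (∫ ξ : Esp n, ((∑ j, ξ j * P₀ j) ^ 2 / ‖ξ‖ ^ 2)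
            * Real.exp (-(2 * α * ‖ξ‖ ^ 2 * t)))
          ≤ C₁⁻¹ ^ 2 * ‖P₀‖ ^ 2 * t ^ (-(n : ℝ) / 2) := by
  have hK : 0 < (π / (2 * α)) ^ ((n : ℝ) / 2) / n := by
    have : (0 : ℝ) < n := by exact_mod_cast hn
    positivity
  obtain ⟨C, hC, hCK, hKC⟩ := exists_pos_sq_le_and_le_inv_sq hK
  refine ⟨C, hC, 1, one_pos, fun t ht => ?_⟩
  rw [integral_dotProduct_sq_div_norm_sq_mul_exp hn hα (one_pos.trans_le ht)]
  have : 0 ≤ ‖P₀‖ ^ 2 * t ^ (-(n : ℝ) / 2) := by positivity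
  constructor <;> nlinarith
end
end

section
/- Let n ≥ 1, α > 0, β ≥ 0, γ > 0. Then there exist a constant C₂ > 0 (depending only on n, α, β, γ) and T > 0 such that for all t ≥ T: C₂² t^{−n/2} ≤ ∫_{ℝⁿ} e^{−(α+β)|ξ|²t} sin²(γ t |ξ|) dξ ≤ C₂^{−2} t^{−n/2}. -/
open MeasureTheory Real Filter

noncomputable section

/-!
Substituting `ξ = x / √t` turns the integral into `t^{-n/2} J(γ√t)`, where
`J(θ) = ∫ e^{-c|x|²} sin²(θ|x|) dx` and `c = α + β`, so it remains to bound `J(θ)` for large `θ`.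
From above, `sin² ≤ 1` gives the Gaussian integral. From below, polar coordinates reduce `J(θ)`
to `∫₀^∞ r^{n-1} e^{-cr²} sin²(θr) dr`; on `[1, 2]` the weight is at least `e^{-4c}`, and the
mean value of `sin²(θr)` over `[1, 2]` is at least `1/2 - 1/(2θ)`.
-/

open Set Module

section OneDimensional

variable {c : ℝ}

lemma sub_div_two_sub_inv_le_integral_sin_sq {θ : ℝ} (hθ : 0 < θ) (a b : ℝ) :
    (b - a) / 2 - (2 * θ)⁻¹ ≤ ∫ u in a..b, sin (θ * u) ^ 2 := by
  rw [intervalIntegral.integral_comp_mul_left (fun u => sin u ^ 2) hθ.ne', integral_sin_sq,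
    smul_eq_mul]
  have h2a := sin_sq_add_cos_sq (θ * a)
  have h2b := sin_sq_add_cos_sq (θ * b)
  have hsc : -1 ≤ sin (θ * a) * cos (θ * a) - sin (θ * b) * cos (θ * b) := by
    nlinarith [sq_nonneg (sin (θ * a) + cos (θ * a)), sq_nonneg (sin (θ * b) - cos (θ * b))]
  rw [show θ⁻¹ * ((sin (θ * a) * cos (θ * a) - sin (θ * b) * cos (θ * b) + θ * b - θ * a) / 2)
      = (b - a) / 2 + (2 * θ)⁻¹ * (sin (θ * a) * cos (θ * a) - sin (θ * b) * cos (θ * b)) by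
    field_simp; ring]
  nlinarith [inv_pos.2 (mul_pos two_pos hθ)]

lemma integrableOn_pow_mul_exp_neg_mul_sq (hc : 0 < c) (k : ℕ) :
    IntegrableOn (fun y : ℝ => y ^ k * exp (-(c * y ^ 2))) (Ioi 0) := by
  refine (integrableOn_rpow_mul_exp_neg_mul_sq hc
    (s := k) (by linarith [k.cast_nonneg (α := ℝ)])).congr_fun (fun y _ => ?_) measurableSet_Ioi
  simp only [rpow_natCast, neg_mul]

lemma integrableOn_pow_mul_exp_neg_mul_sq_mul_sin_sq (hc : 0 < c) (k : ℕ) (θ : ℝ) :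
    IntegrableOn (fun y : ℝ => y ^ k * (exp (-(c * y ^ 2)) * sin (θ * y) ^ 2)) (Ioi 0) := by
  refine (integrableOn_pow_mul_exp_neg_mul_sq hc k).mono' (by fun_prop) ?_
  filter_upwards [ae_restrict_mem measurableSet_Ioi] with y (hy : 0 < y)
  rw [norm_of_nonneg (by positivity), ← mul_assoc]
  exact mul_le_of_le_one_right (by positivity) (sin_sq_le_one _)

lemma integral_pow_mul_exp_neg_mul_sq_mul_sin_sq_le (hc : 0 < c) (k : ℕ) (θ : ℝ) :
    ∫ y in Ioi 0, y ^ k * (exp (-(c * y ^ 2)) * sin (θ * y) ^ 2)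
      ≤ ∫ y in Ioi 0, y ^ k * exp (-(c * y ^ 2)) := by
  refine setIntegral_mono_on (integrableOn_pow_mul_exp_neg_mul_sq_mul_sin_sq hc k θ)
    (integrableOn_pow_mul_exp_neg_mul_sq hc k) measurableSet_Ioi fun y (hy : 0 < y) => ?_
  rw [← mul_assoc]
  exact mul_le_of_le_one_right (by positivity) (sin_sq_le_one _)

lemma le_integral_pow_mul_exp_neg_mul_sq_mul_sin_sq (hc : 0 < c) (k : ℕ) {θ : ℝ} (hθ : 2 ≤ θ) :
    exp (-(4 * c)) / 4 ≤ ∫ y in Ioi 0, y ^ k * (exp (-(c * y ^ 2)) * sin (θ * y) ^ 2) := by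
  have hweight : ∀ y ∈ Ioc (1 : ℝ) 2,
      exp (-(4 * c)) * sin (θ * y) ^ 2 ≤ y ^ k * (exp (-(c * y ^ 2)) * sin (θ * y) ^ 2) := by
    rintro y ⟨hy1, hy2⟩
    rw [← mul_assoc]
    refine mul_le_mul_of_nonneg_right ?_ (sq_nonneg _)
    have hy : y ^ 2 ≤ 4 := by nlinarith
    calc exp (-(4 * c)) ≤ exp (-(c * y ^ 2)) := exp_le_exp.2 (by nlinarith)
      _ ≤ y ^ k * exp (-(c * y ^ 2)) := le_mul_of_one_le_left (exp_pos _).le (one_le_pow₀ hy1.le)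
  have hmean := sub_div_two_sub_inv_le_integral_sin_sq (by linarith : 0 < θ) 1 2
  have hθinv : (2 * θ)⁻¹ ≤ 1 / 4 := by
    rw [inv_le_comm₀ (by linarith) (by norm_num)]; linarith
  calc exp (-(4 * c)) / 4 ≤ exp (-(4 * c)) * ∫ u in (1 : ℝ)..2, sin (θ * u) ^ 2 := by
        nlinarith [exp_pos (-(4 * c))]
    _ = ∫ y in Ioc 1 2, exp (-(4 * c)) * sin (θ * y) ^ 2 := by
        rw [intervalIntegral.integral_of_le one_le_two, integral_const_mul]
    _ ≤ ∫ y in Ioc 1 2, y ^ k * (exp (-(c * y ^ 2)) * sin (θ * y) ^ 2) :=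
        setIntegral_mono_on (Continuous.integrableOn_Ioc (by fun_prop))
          (Continuous.integrableOn_Ioc (by fun_prop)) measurableSet_Ioc hweight
    _ ≤ ∫ y in Ioi 0, y ^ k * (exp (-(c * y ^ 2)) * sin (θ * y) ^ 2) := by
        refine setIntegral_mono_set (integrableOn_pow_mul_exp_neg_mul_sq_mul_sin_sq hc k θ) ?_
          (Ioc_subset_Ioi_self.trans (Ioi_subset_Ioi zero_le_one)).eventuallyLE
        filter_upwards [ae_restrict_mem measurableSet_Ioi] with y (hy : 0 < y)
        positivity

end OneDimensional

section AddHaar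

variable {E : Type*} [NormedAddCommGroup E] [NormedSpace ℝ E] [FiniteDimensional ℝ E]
  [MeasurableSpace E] [BorelSpace E] (μ : Measure E) [μ.IsAddHaarMeasure]

lemma integral_exp_mul_sin_sq_norm_eq_rpow_mul (c γ : ℝ) {t : ℝ} (ht : 0 < t) :
    ∫ x, exp (-(c * ‖x‖ ^ 2 * t)) * sin (γ * t * ‖x‖) ^ 2 ∂μ
      = t ^ (-(finrank ℝ E : ℝ) / 2) * ∫ x, exp (-(c * ‖x‖ ^ 2)) * sin (γ * √t * ‖x‖) ^ 2 ∂μ := by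
  have hscale := Measure.integral_comp_smul μ
    (fun x => exp (-(c * ‖x‖ ^ 2)) * sin (γ * √t * ‖x‖) ^ 2) √t
  have hpow : |(√t ^ finrank ℝ E)⁻¹| = t ^ (-(finrank ℝ E : ℝ) / 2) := by
    rw [abs_of_nonneg (by positivity), sqrt_eq_rpow, ← rpow_natCast, ← rpow_mul ht.le,
      ← rpow_neg ht.le]
    ring_nf
  rw [hpow, smul_eq_mul] at hscale
  rw [← hscale]
  congr 1 with x
  have hsin : γ * √t * (√t * ‖x‖) = γ * t * ‖x‖ := by
    linear_combination γ * ‖x‖ * mul_self_sqrt ht.le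
  rw [norm_smul, norm_of_nonneg (sqrt_nonneg t), hsin, mul_pow, sq_sqrt ht.le]
  ring_nf

variable [Nontrivial E]

lemma exists_bounds_integral_exp_mul_sin_sq_norm {c : ℝ} (hc : 0 < c) :
    ∃ A > 0, ∃ B > 0, ∀ θ : ℝ, 2 ≤ θ →
      A ≤ ∫ x, exp (-(c * ‖x‖ ^ 2)) * sin (θ * ‖x‖) ^ 2 ∂μ ∧
      ∫ x, exp (-(c * ‖x‖ ^ 2)) * sin (θ * ‖x‖) ^ 2 ∂μ ≤ B := by
  set V := (finrank ℝ E : ℝ) * μ.real (Metric.ball 0 1)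
  have hVpos : 0 < V := by
    have := finrank_pos (R := ℝ) (M := E)
    have : 0 < μ.real (Metric.ball (0 : E) 1) :=
      ENNReal.toReal_pos (Metric.measure_ball_pos μ 0 one_pos).ne' measure_ball_lt_top.ne
    positivity
  have hradial (θ : ℝ) : ∫ x, exp (-(c * ‖x‖ ^ 2)) * sin (θ * ‖x‖) ^ 2 ∂μ
      = V * ∫ y in Ioi 0, y ^ (finrank ℝ E - 1) * (exp (-(c * y ^ 2)) * sin (θ * y) ^ 2) := by
    rw [integral_fun_norm_addHaar μ (fun y => exp (-(c * y ^ 2)) * sin (θ * y) ^ 2)]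
    simp only [smul_eq_mul, nsmul_eq_mul, V, mul_assoc]
  have hbounds : ∀ θ : ℝ, 2 ≤ θ →
      V * (exp (-(4 * c)) / 4) ≤ ∫ x, exp (-(c * ‖x‖ ^ 2)) * sin (θ * ‖x‖) ^ 2 ∂μ ∧
      ∫ x, exp (-(c * ‖x‖ ^ 2)) * sin (θ * ‖x‖) ^ 2 ∂μ
        ≤ V * ∫ y in Ioi 0, y ^ (finrank ℝ E - 1) * exp (-(c * y ^ 2)) := fun θ hθ => by
    rw [hradial]
    exact ⟨mul_le_mul_of_nonneg_left
        (le_integral_pow_mul_exp_neg_mul_sq_mul_sin_sq hc _ hθ) hVpos.le,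
      mul_le_mul_of_nonneg_left (integral_pow_mul_exp_neg_mul_sq_mul_sin_sq_le hc _ θ) hVpos.le⟩
  have hA : 0 < V * (exp (-(4 * c)) / 4) := by positivity
  exact ⟨_, hA, _, hA.trans_le ((hbounds 2 le_rfl).1.trans (hbounds 2 le_rfl).2), hbounds⟩

end AddHaar

lemma exists_sq_le_and_le_inv_sq {A B : ℝ} (hA : 0 < A) (hB : 0 < B) :
    ∃ C > 0, C ^ 2 ≤ A ∧ B ≤ C⁻¹ ^ 2 := by
  have hm : 0 < min A B⁻¹ := lt_min hA (inv_pos.2 hB)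
  refine ⟨√(min A B⁻¹), sqrt_pos.2 hm, ?_, ?_⟩
  · rw [sq_sqrt hm.le]; exact min_le_left _ _
  · rw [inv_pow, sq_sqrt hm.le, le_inv_comm₀ hB hm]; exact min_le_right _ _

/-- two-sided bound of order `t^{-n/2}` for
`∫ e^{-(α+β)|ξ|²t} sin²(γt|ξ|) dξ`. -/
theorem stmt12
    (n : ℕ) (hn : 1 ≤ n) (α β γ : ℝ) (hα : 0 < α) (hβ : 0 ≤ β) (hγ : 0 < γ) :
    ∃ C₂ > (0 : ℝ), ∃ T > (0 : ℝ), ∀ t : ℝ, T ≤ t →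
      C₂ ^ 2 * t ^ (-(n : ℝ) / 2)
        ≤ (∫ ξ : Esp n, Real.exp (-((α + β) * ‖ξ‖ ^ 2 * t)) * Real.sin (γ * t * ‖ξ‖) ^ 2)
      ∧ (∫ ξ : Esp n, Real.exp (-((α + β) * ‖ξ‖ ^ 2 * t)) * Real.sin (γ * t * ‖ξ‖) ^ 2)
          ≤ C₂⁻¹ ^ 2 * t ^ (-(n : ℝ) / 2) := by
  have : Nontrivial (Esp n) :=
    Module.nontrivial_of_finrank_pos (R := ℝ) (by rwa [finrank_euclideanSpace_fin])
  obtain ⟨A, hA, B, hB, hbounds⟩ :=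
    exists_bounds_integral_exp_mul_sin_sq_norm (volume : Measure (Esp n)) (c := α + β)
      (by positivity)
  obtain ⟨C, hC, hCA, hCB⟩ := exists_sq_le_and_le_inv_sq hA hB
  refine ⟨C, hC, (2 / γ) ^ 2, by positivity, fun t ht => ?_⟩
  have ht0 : 0 < t := lt_of_lt_of_le (by positivity) ht
  have hθ : 2 ≤ γ * √t := by
    rw [← div_le_iff₀' hγ, ← sqrt_sq (by positivity : 0 ≤ 2 / γ)]
    exact sqrt_le_sqrt ht
  obtain ⟨hlower, hupper⟩ := hbounds _ hθ
  rw [integral_exp_mul_sin_sq_norm_eq_rpow_mul _ _ _ ht0, finrank_euclideanSpace_fin]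
  have hpow : 0 ≤ t ^ (-(n : ℝ) / 2) := (rpow_pos_of_pos ht0 _).le
  exact ⟨(mul_le_mul_of_nonneg_right (hCA.trans hlower) hpow).trans_eq (mul_comm _ _),
    (mul_comm _ _).trans_le (mul_le_mul_of_nonneg_right (hupper.trans hCB) hpow)⟩
end
end

section
/- Let n ≥ 1, α > 0, β ≥ 0, γ > 0 and P₀ ∈ ℝⁿ. Then there exist a constant C₃ > 0 (depending only on n, α, β, γ) and T > 0 such that for all t ≥ T: C₃² |P₀|² t^{−n/2} ≤ ∫_{ℝⁿ} ( |ξ·P₀|² / |ξ|² ) e^{−(α+β)|ξ|²t} cos²(γ t |ξ|) dξ ≤ C₃^{−2} |P₀|² t^{−n/2}. -/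
/-!
Reflecting one coordinate and swapping two coordinates are measure-preserving isometries, so
for a radial weight `h` the matrix `∫ ξᵢ ξⱼ / |ξ|² h(|ξ|) dξ` is `(1/n) ∫ h(|ξ|) dξ` times the
identity, and the integral equals `|P₀|²/n · J(t)` with `J(t) = ∫ e^{-(α+β)|ξ|²t} cos²(γt|ξ|) dξ`.
Substituting `ξ = η/√t` gives `J(t) = t^{-n/2} ∫ e^{-(α+β)|η|²} cos²(γ√t|η|) dη`. This last
integral is at most the Gaussian integral `A = (π/(α+β))^{n/2}`, and since
`cos² = (1 + cos 2·)/2` it tends to `A/2`: in polar coordinates the oscillatory half is a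
one-dimensional cosine transform, which vanishes at infinity by the Riemann–Lebesgue lemma.
-/

open MeasureTheory Real Filter

noncomputable section

open scoped Topology
open Module

theorem tendsto_integral_cos_mul_mul {f : ℝ → ℝ} (hf : Integrable f) :
    Tendsto (fun s => ∫ y, cos (s * y) * f y) atTop (𝓝 0) := by
  have hRL := (Real.tendsto_integral_exp_smul_cocompact (fun y => (f y : ℂ))).comp
    ((tendsto_id.atTop_div_const two_pi_pos).mono_right atTop_le_cocompact)
  have hre := (Complex.continuous_re.tendsto 0).comp hRL
  rw [Complex.zero_re] at hre
  refine hre.congr fun s => ?_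
  have hint : Integrable fun y : ℝ => Real.fourierChar (-(y * (s / (2 * π)))) • (f y : ℂ) := by
    simpa [mul_comm _ (s / (2 * π))] using
      (Real.fourierIntegral_convergent_iff (s / (2 * π))).2 hf.ofReal
  rw [Function.comp_apply, Function.comp_apply, id, ← RCLike.re_eq_complex_re, ← integral_re hint]
  congr 1 with y
  rw [Circle.smul_def, Real.fourierChar_apply, RCLike.re_eq_complex_re, smul_eq_mul,
    Complex.re_mul_ofReal, Complex.exp_ofReal_mul_I_re]
  congr 1
  rw [← cos_neg]
  congr 1
  field_simp

section HaarMeasure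

variable {E : Type*} [NormedAddCommGroup E] [NormedSpace ℝ E] [FiniteDimensional ℝ E]
  [MeasurableSpace E] [BorelSpace E] (μ : Measure E) [μ.IsAddHaarMeasure]

theorem integral_comp_sqrt_mul_norm {F : Type*} [NormedAddCommGroup F] [NormedSpace ℝ F]
    (f : ℝ → F) {t : ℝ} (ht : 0 < t) :
    ∫ x, f (√t * ‖x‖) ∂μ = t ^ (-(finrank ℝ E : ℝ) / 2) • ∫ x, f ‖x‖ ∂μ := by
  have h := μ.integral_comp_smul (fun x => f ‖x‖) √t
  simp only [norm_smul, norm_of_nonneg (sqrt_nonneg t)] at h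
  rw [h, abs_of_nonneg (by positivity), sqrt_eq_rpow, ← rpow_natCast, ← rpow_mul ht.le,
    ← rpow_neg ht.le]
  ring_nf

theorem tendsto_integral_cos_mul_norm_mul_exp_neg_mul_sq_norm [Nontrivial E] {c : ℝ} (hc : 0 < c) :
    Tendsto (fun s => ∫ x, cos (s * ‖x‖) * exp (-c * ‖x‖ ^ 2) ∂μ) atTop (𝓝 0) := by
  set d := finrank ℝ E
  set F : ℝ → ℝ := (Set.Ioi 0).indicator fun y => y ^ (d - 1) * exp (-c * y ^ 2)
  have hF : Integrable F := by
    rw [integrable_indicator_iff measurableSet_Ioi]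
    refine (integrableOn_rpow_mul_exp_neg_mul_sq hc (s := (d - 1 : ℕ))
      (by linarith [(d - 1 : ℕ).cast_nonneg (α := ℝ)])).congr_fun
      (fun y _ => by simp only [rpow_natCast]) measurableSet_Ioi
  have h := (tendsto_integral_cos_mul_mul hF).const_mul (d * μ.real (Metric.ball 0 1))
  rw [mul_zero] at h
  refine h.congr fun s => ?_
  rw [integral_fun_norm_addHaar μ (fun r => cos (s * r) * exp (-c * r ^ 2)),
    ← integral_indicator measurableSet_Ioi, nsmul_eq_mul, smul_eq_mul, ← mul_assoc]
  congr 2 with y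
  by_cases hy : y ∈ Set.Ioi 0
  · simp only [F, Set.indicator_of_mem hy, smul_eq_mul]
    ring
  · simp [F, Set.indicator_of_notMem hy]

end HaarMeasure

section InnerProductSpace

variable {V : Type*} [NormedAddCommGroup V] [InnerProductSpace ℝ V] [FiniteDimensional ℝ V]
  [MeasurableSpace V] [BorelSpace V]

theorem integrable_exp_neg_mul_sq_norm {b : ℝ} (hb : 0 < b) :
    Integrable fun x : V => exp (-b * ‖x‖ ^ 2) :=
  Integrable.of_integral_ne_zero <| by
    rw [GaussianFourier.integral_rexp_neg_mul_sq_norm hb]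
    positivity

theorem integrable_exp_neg_mul_sq_norm_mul_cos_sq {b : ℝ} (hb : 0 < b) (s : ℝ) :
    Integrable fun x : V => exp (-b * ‖x‖ ^ 2) * cos (s * ‖x‖) ^ 2 :=
  (integrable_exp_neg_mul_sq_norm hb).mul_bdd (c := 1) (by fun_prop) <|
    .of_forall fun x => by simpa using cos_sq_le_one (s * ‖x‖)

theorem integral_exp_neg_mul_sq_norm_mul_cos_sq_le {c : ℝ} (hc : 0 < c) (s : ℝ) :
    ∫ x : V, exp (-c * ‖x‖ ^ 2) * cos (s * ‖x‖) ^ 2 ≤ (π / c) ^ (finrank ℝ V / 2 : ℝ) := by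
  rw [← GaussianFourier.integral_rexp_neg_mul_sq_norm hc]
  exact integral_mono (integrable_exp_neg_mul_sq_norm_mul_cos_sq hc s)
    (integrable_exp_neg_mul_sq_norm hc)
    fun x => mul_le_of_le_one_right (exp_nonneg _) (cos_sq_le_one _)

theorem tendsto_integral_exp_neg_mul_sq_norm_mul_cos_sq [Nontrivial V] {c : ℝ} (hc : 0 < c) :
    Tendsto (fun s => ∫ x : V, exp (-c * ‖x‖ ^ 2) * cos (s * ‖x‖) ^ 2) atTop
      (𝓝 ((π / c) ^ (finrank ℝ V / 2 : ℝ) / 2)) := by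
  have hosc := ((tendsto_integral_cos_mul_norm_mul_exp_neg_mul_sq_norm (volume : Measure V) hc).comp
    (tendsto_id.const_mul_atTop two_pos)).const_mul (1 / 2)
  have := hosc.const_add ((π / c) ^ (finrank ℝ V / 2 : ℝ) / 2)
  rw [mul_zero, add_zero] at this
  refine this.congr fun s => Eq.symm ?_
  have hcos : Integrable fun x : V => cos (2 * s * ‖x‖) * exp (-c * ‖x‖ ^ 2) :=
    (integrable_exp_neg_mul_sq_norm hc).bdd_mul (c := 1) (by fun_prop)
      (.of_forall fun x => abs_cos_le_one _)
  calc ∫ x : V, exp (-c * ‖x‖ ^ 2) * cos (s * ‖x‖) ^ 2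
      = ∫ x : V, (1 / 2 * exp (-c * ‖x‖ ^ 2)
          + 1 / 2 * (cos (2 * s * ‖x‖) * exp (-c * ‖x‖ ^ 2))) := by
        congr 1 with x
        rw [cos_sq, mul_assoc]
        ring
    _ = _ := by
        rw [integral_add ((integrable_exp_neg_mul_sq_norm hc).const_mul _) (hcos.const_mul _),
          integral_const_mul, integral_const_mul, GaussianFourier.integral_rexp_neg_mul_sq_norm hc]
        simp only [Function.comp_apply, id]
        ring

theorem eventually_integral_exp_mul_cos_sq_bounds [Nontrivial V] {c γ : ℝ} (hc : 0 < c)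
    (hγ : 0 < γ) :
    ∀ᶠ t in atTop,
      (π / c) ^ (finrank ℝ V / 2 : ℝ) / 4 * t ^ (-(finrank ℝ V : ℝ) / 2)
          ≤ ∫ x : V, exp (-(c * ‖x‖ ^ 2 * t)) * cos (γ * t * ‖x‖) ^ 2
        ∧ ∫ x : V, exp (-(c * ‖x‖ ^ 2 * t)) * cos (γ * t * ‖x‖) ^ 2
          ≤ (π / c) ^ (finrank ℝ V / 2 : ℝ) * t ^ (-(finrank ℝ V : ℝ) / 2) := by
  set A := (π / c) ^ (finrank ℝ V / 2 : ℝ)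
  have hA : 0 < A := by positivity
  have hlim := (tendsto_integral_exp_neg_mul_sq_norm_mul_cos_sq (V := V) hc).comp
    (Real.tendsto_sqrt_atTop.const_mul_atTop hγ)
  filter_upwards [hlim.eventually_const_lt (by linarith : A / 4 < A / 2), eventually_gt_atTop 0]
    with t hlow ht
  have hscale : ∫ x : V, exp (-(c * ‖x‖ ^ 2 * t)) * cos (γ * t * ‖x‖) ^ 2
      = t ^ (-(finrank ℝ V : ℝ) / 2) * ∫ x : V, exp (-c * ‖x‖ ^ 2) * cos (γ * √t * ‖x‖) ^ 2 := by
    rw [← smul_eq_mul (a := t ^ _), ← integral_comp_sqrt_mul_norm _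
      (fun r => exp (-c * r ^ 2) * cos (γ * √t * r) ^ 2) ht]
    congr 1 with x
    have hcos : γ * √t * (√t * ‖x‖) = γ * t * ‖x‖ := by
      linear_combination γ * ‖x‖ * mul_self_sqrt ht.le
    rw [mul_pow, sq_sqrt ht.le, hcos]
    ring_nf
  rw [hscale]
  have htd : 0 ≤ t ^ (-(finrank ℝ V : ℝ) / 2) := by positivity
  constructor
  · rw [mul_comm]
    exact mul_le_mul_of_nonneg_left hlow.le htd
  · rw [mul_comm A]
    exact mul_le_mul_of_nonneg_left (integral_exp_neg_mul_sq_norm_mul_cos_sq_le hc _) htd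

end InnerProductSpace

namespace EuclideanSpace

variable {ι : Type*} [Fintype ι]

def coordReflection [DecidableEq ι] (i : ι) : EuclideanSpace ℝ ι ≃ₗᵢ[ℝ] EuclideanSpace ℝ ι :=
  LinearIsometryEquiv.piLpCongrRight 2 fun k => if k = i then .neg ℝ else .refl ℝ ℝ

theorem coordReflection_apply [DecidableEq ι] (i : ι) (ξ : EuclideanSpace ℝ ι) (k : ι) :
    coordReflection i ξ k = if k = i then -ξ k else ξ k := by
  rcases eq_or_ne k i with rfl | h <;> simp [coordReflection, *]

theorem integral_coord_mul_coord_div_norm_sq_mul_eq_zero [DecidableEq ι] (h : ℝ → ℝ) {i j : ι}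
    (hij : i ≠ j) : ∫ ξ : EuclideanSpace ℝ ι, ξ i * ξ j / ‖ξ‖ ^ 2 * h ‖ξ‖ = 0 := by
  have := integral_comp (coordReflection i)
    fun ξ : EuclideanSpace ℝ ι => ξ i * ξ j / ‖ξ‖ ^ 2 * h ‖ξ‖
  simp only [coordReflection_apply, if_pos, if_neg hij.symm, LinearIsometryEquiv.norm_map, neg_mul,
    neg_div, integral_neg] at this
  linarith

theorem integral_coord_sq_div_norm_sq_mul_eq [DecidableEq ι] (h : ℝ → ℝ) (i j : ι) :
    ∫ ξ : EuclideanSpace ℝ ι, ξ i * ξ i / ‖ξ‖ ^ 2 * h ‖ξ‖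
      = ∫ ξ : EuclideanSpace ℝ ι, ξ j * ξ j / ‖ξ‖ ^ 2 * h ‖ξ‖ := by
  have := integral_comp (LinearIsometryEquiv.piLpCongrLeft 2 ℝ ℝ (Equiv.swap i j))
    fun ξ : EuclideanSpace ℝ ι => ξ i * ξ i / ‖ξ‖ ^ 2 * h ‖ξ‖
  simpa [LinearIsometryEquiv.norm_map, Equiv.piCongrLeft'] using this.symm

theorem integrable_coord_mul_coord_div_norm_sq_mul {h : ℝ → ℝ}
    (hint : Integrable fun ξ : EuclideanSpace ℝ ι => h ‖ξ‖) (i j : ι) :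
    Integrable fun ξ : EuclideanSpace ℝ ι => ξ i * ξ j / ‖ξ‖ ^ 2 * h ‖ξ‖ :=
  hint.bdd_mul (c := 1) (Measurable.aestronglyMeasurable (by fun_prop)) <| .of_forall fun ξ => by
    rw [norm_div, norm_mul, norm_pow, norm_norm, sq]
    exact div_le_one_of_le₀ (mul_le_mul (PiLp.norm_apply_le ξ i) (PiLp.norm_apply_le ξ j)
      (norm_nonneg _) (norm_nonneg _)) (by positivity)

theorem integral_coord_mul_coord_div_norm_sq_mul [DecidableEq ι] {h : ℝ → ℝ}
    (hint : Integrable fun ξ : EuclideanSpace ℝ ι => h ‖ξ‖) (i j : ι) :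
    ∫ ξ : EuclideanSpace ℝ ι, ξ i * ξ j / ‖ξ‖ ^ 2 * h ‖ξ‖
      = if i = j then (∫ ξ : EuclideanSpace ℝ ι, h ‖ξ‖) / Fintype.card ι else 0 := by
  split_ifs with hij
  · subst hij
    have : Nonempty ι := ⟨i⟩
    have hsum : ∑ k, ∫ ξ : EuclideanSpace ℝ ι, ξ k * ξ k / ‖ξ‖ ^ 2 * h ‖ξ‖
        = ∫ ξ : EuclideanSpace ℝ ι, h ‖ξ‖ := by
      rw [← integral_finsetSum _ fun k _ => integrable_coord_mul_coord_div_norm_sq_mul hint k k]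
      have hae : ∀ᵐ ξ : EuclideanSpace ℝ ι, ξ ≠ 0 := compl_mem_ae_iff.2 (measure_singleton 0)
      refine integral_congr_ae <| hae.mono fun ξ hξ => ?_
      simp only [← sq, ← Finset.sum_mul, ← Finset.sum_div, ← EuclideanSpace.real_norm_sq_eq]
      rw [div_self (pow_ne_zero 2 (norm_ne_zero_iff.2 hξ)), one_mul]
    rw [← hsum, Finset.sum_congr rfl fun k _ => (integral_coord_sq_div_norm_sq_mul_eq h i k).symm,
      Finset.sum_const, Finset.card_univ, nsmul_eq_mul, mul_div_cancel_left₀ _ (by positivity)]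
  · exact integral_coord_mul_coord_div_norm_sq_mul_eq_zero h hij

theorem integral_sum_mul_sq_div_norm_sq_mul {h : ℝ → ℝ}
    (hint : Integrable fun ξ : EuclideanSpace ℝ ι => h ‖ξ‖) (P : EuclideanSpace ℝ ι) :
    ∫ ξ : EuclideanSpace ℝ ι, (∑ j, ξ j * P j) ^ 2 / ‖ξ‖ ^ 2 * h ‖ξ‖
      = ‖P‖ ^ 2 / Fintype.card ι * ∫ ξ : EuclideanSpace ℝ ι, h ‖ξ‖ := by
  classical
  have hexpand (ξ : EuclideanSpace ℝ ι) : (∑ j, ξ j * P j) ^ 2 / ‖ξ‖ ^ 2 * h ‖ξ‖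
      = ∑ i, ∑ j, P i * P j * (ξ i * ξ j / ‖ξ‖ ^ 2 * h ‖ξ‖) := by
    rw [sq, Finset.sum_mul_sum]
    simp only [Finset.sum_div, Finset.sum_mul]
    exact Finset.sum_congr rfl fun i _ => Finset.sum_congr rfl fun j _ => by ring
  have hint' (i j : ι) :=
    (integrable_coord_mul_coord_div_norm_sq_mul hint i j).const_mul (P i * P j)
  simp_rw [hexpand]
  rw [integral_finsetSum _ fun i _ => integrable_finsetSum _ fun j _ => hint' i j]
  simp_rw [integral_finsetSum _ fun j _ => hint' _ j, integral_const_mul,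
    integral_coord_mul_coord_div_norm_sq_mul hint, mul_ite, mul_zero, Finset.sum_ite_eq,
    Finset.mem_univ, if_true, ← sq, ← Finset.sum_mul, ← EuclideanSpace.real_norm_sq_eq]
  ring

end EuclideanSpace

theorem eventually_integral_sum_mul_sq_div_norm_sq_mul_bounds {n : ℕ} (hn : 1 ≤ n) {c γ : ℝ}
    (hc : 0 < c) (hγ : 0 < γ) (P : Esp n) :
    ∀ᶠ t in atTop,
      ‖P‖ ^ 2 / n * ((π / c) ^ (n / 2 : ℝ) / 4 * t ^ (-(n : ℝ) / 2))
          ≤ ∫ ξ : Esp n, (∑ j, ξ j * P j) ^ 2 / ‖ξ‖ ^ 2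
              * exp (-(c * ‖ξ‖ ^ 2 * t)) * cos (γ * t * ‖ξ‖) ^ 2
        ∧ ∫ ξ : Esp n, (∑ j, ξ j * P j) ^ 2 / ‖ξ‖ ^ 2
              * exp (-(c * ‖ξ‖ ^ 2 * t)) * cos (γ * t * ‖ξ‖) ^ 2
          ≤ ‖P‖ ^ 2 / n * ((π / c) ^ (n / 2 : ℝ) * t ^ (-(n : ℝ) / 2)) := by
  have : Nonempty (Fin n) := ⟨⟨0, hn⟩⟩
  have hbounds := eventually_integral_exp_mul_cos_sq_bounds (V := Esp n) hc hγ
  simp only [finrank_euclideanSpace_fin] at hbounds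
  filter_upwards [hbounds, eventually_gt_atTop 0] with t ⟨hlow, hup⟩ ht
  have hint : Integrable fun ξ : Esp n => exp (-(c * ‖ξ‖ ^ 2 * t)) * cos (γ * t * ‖ξ‖) ^ 2 := by
    convert integrable_exp_neg_mul_sq_norm_mul_cos_sq (V := Esp n) (mul_pos hc ht) (γ * t) using 4
    ring
  have hsym := EuclideanSpace.integral_sum_mul_sq_div_norm_sq_mul
    (h := fun r => exp (-(c * r ^ 2 * t)) * cos (γ * t * r) ^ 2) hint P
  simp only [Fintype.card_fin, ← mul_assoc] at hsym
  rw [hsym]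
  exact ⟨by gcongr, by gcongr⟩

/-- two-sided bound of order `t^{-n/2}` for
`∫ (|ξ·P₀|²/|ξ|²) e^{-(α+β)|ξ|²t} cos²(γt|ξ|) dξ`. -/
theorem stmt13
    (n : ℕ) (hn : 1 ≤ n) (α β γ : ℝ) (hα : 0 < α) (hβ : 0 ≤ β) (hγ : 0 < γ)
    (P₀ : Esp n) :
    ∃ C₃ > (0 : ℝ), ∃ T > (0 : ℝ), ∀ t : ℝ, T ≤ t →
      C₃ ^ 2 * ‖P₀‖ ^ 2 * t ^ (-(n : ℝ) / 2)
        ≤ (∫ ξ : Esp n, ((∑ j, ξ j * P₀ j) ^ 2 / ‖ξ‖ ^ 2)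
            * Real.exp (-((α + β) * ‖ξ‖ ^ 2 * t)) * Real.cos (γ * t * ‖ξ‖) ^ 2)
      ∧ (∫ ξ : Esp n, ((∑ j, ξ j * P₀ j) ^ 2 / ‖ξ‖ ^ 2)
            * Real.exp (-((α + β) * ‖ξ‖ ^ 2 * t)) * Real.cos (γ * t * ‖ξ‖) ^ 2)
          ≤ C₃⁻¹ ^ 2 * ‖P₀‖ ^ 2 * t ^ (-(n : ℝ) / 2) := by
  have hn' : (0 : ℝ) < n := by exact_mod_cast hn
  obtain ⟨T, hT⟩ := eventually_atTop.1 <|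
    eventually_integral_sum_mul_sq_div_norm_sq_mul_bounds hn (by linarith : 0 < α + β) hγ P₀
  set A := (π / (α + β)) ^ ((n : ℝ) / 2)
  have hA : 0 < A := by positivity
  set C₃ := √(min (A / (4 * n)) (n / A))
  have hC₃ : C₃ ^ 2 = min (A / (4 * n)) (n / A) := sq_sqrt (by positivity)
  refine ⟨C₃, by positivity, max T 1, by positivity, fun t htT => ?_⟩
  obtain ⟨hlow, hup⟩ := hT t (le_of_max_le_left htT)
  have ht : 0 < t := lt_of_lt_of_le one_pos (le_of_max_le_right htT)
  constructor
  · calc C₃ ^ 2 * ‖P₀‖ ^ 2 * t ^ (-(n : ℝ) / 2)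
        ≤ A / (4 * n) * ‖P₀‖ ^ 2 * t ^ (-(n : ℝ) / 2) := by
          gcongr
          exact hC₃ ▸ min_le_left _ _
      _ = ‖P₀‖ ^ 2 / n * (A / 4 * t ^ (-(n : ℝ) / 2)) := by ring
      _ ≤ _ := hlow
  · calc _ ≤ ‖P₀‖ ^ 2 / n * (A * t ^ (-(n : ℝ) / 2)) := hup
      _ = (n / A)⁻¹ * ‖P₀‖ ^ 2 * t ^ (-(n : ℝ) / 2) := by field_simp
      _ ≤ C₃⁻¹ ^ 2 * ‖P₀‖ ^ 2 * t ^ (-(n : ℝ) / 2) := by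
          gcongr
          rw [inv_pow, hC₃]
          exact inv_anti₀ (by positivity) (min_le_right _ _)
end
end

section
/- Let n ≥ 1, α > 0, β ≥ 0, γ > 0 and set I(t) := ∫_{ℝⁿ} e^{−(α+β)|ξ|²t} sin²(γ t |ξ|) dξ. Then lim_{t→∞} t^{n/2} I(t) = (σ_{n−1}/2) (α+β)^{−n/2} S₀, where σ_{n−1} is the surface measure of the unit sphere in ℝⁿ and S₀ := ∫_0^∞ e^{−θ²} θ^{n−1} dθ. -/
/-! Substituting `ξ = η / √t` turns `t^{n/2} I(t)` into
`∫ e^{-(α+β)|η|²} sin²(γ √t |η|) dη`, which polar coordinates reduce to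
`σ_{n-1} ∫_0^∞ r^{n-1} e^{-(α+β) r²} sin²(γ √t r) dr`. Writing `sin² x = (1 - cos 2x) / 2`, the
cosine part is an oscillatory integral of a fixed integrable function and tends to `0` by the
Riemann–Lebesgue lemma, while the remaining Gaussian moment equals `(α+β)^{-n/2} S₀ / 2` after the
substitution `θ = √(α+β) r`. -/

open MeasureTheory Real Filter

noncomputable section

/-- The surface measure `σ_{n-1}` of the unit sphere in `ℝⁿ`, expressed by the standard
identity `σ_{n-1} = n · vol(B(0,1))`. -/
def sphereSurface (n : ℕ) : ℝ :=
  n * (volume (Metric.ball (0 : Esp n) 1)).toReal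

open Set Module FourierTransform Topology

theorem tendsto_integral_cos_mul_atTop {g : ℝ → ℝ} (hg : Integrable g) :
    Tendsto (fun k : ℝ => ∫ v, cos (k * v) * g v) atTop (𝓝 0) := by
  have hfourier : Tendsto (fun w : ℝ => ∫ v, 𝐞 (-(v * w)) • (g v : ℂ)) atTop (𝓝 0) :=
    (Real.tendsto_integral_exp_smul_cocompact _).mono_left atTop_le_cocompact
  have hre := (Complex.continuous_re.tendsto 0).comp hfourier
  rw [Complex.zero_re] at hre
  have hscale : Tendsto (fun k : ℝ => k / (2 * π)) atTop atTop :=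
    tendsto_id.atTop_div_const (by positivity)
  -- `cos (k v)` is the real part of `𝐞 (-(v * (k / 2π)))`.
  refine (hre.comp hscale).congr fun k => ?_
  have hint : Integrable (fun v : ℝ => 𝐞 (-(v * (k / (2 * π)))) • (g v : ℂ)) := by
    simpa [mul_comm] using
      (Real.fourierIntegral_convergent_iff (k / (2 * π))).2 hg.ofReal
  rw [Function.comp_apply, Function.comp_apply, ← RCLike.re_to_complex, ← integral_re hint]
  refine integral_congr_ae (ae_of_all _ fun v => ?_)
  have hangle : 2 * π * -(v * (k / (2 * π))) = -(k * v) := by field_simp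
  simp only [Circle.smul_def, Real.fourierChar_apply, smul_eq_mul, RCLike.re_to_complex,
    Complex.mul_re, Complex.ofReal_re, Complex.ofReal_im, mul_zero, sub_zero,
    Complex.exp_ofReal_mul_I_re, hangle, cos_neg]

theorem tendsto_setIntegral_cos_mul_atTop {g : ℝ → ℝ} {s : Set ℝ} (hs : MeasurableSet s)
    (hg : IntegrableOn g s) :
    Tendsto (fun k : ℝ => ∫ v in s, cos (k * v) * g v) atTop (𝓝 0) := by
  refine (tendsto_integral_cos_mul_atTop ((integrable_indicator_iff hs).2 hg)).congr fun k => ?_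
  rw [← integral_indicator hs]
  congr with v
  by_cases hv : v ∈ s <;> simp [hv]

theorem integral_mul_sin_sq {α : Type*} [MeasurableSpace α] {μ : Measure α} {f : α → ℝ}
    (hf : Integrable f μ) (u : α → ℝ) (hu : AEStronglyMeasurable u μ) :
    ∫ x, f x * sin (u x) ^ 2 ∂μ = (∫ x, f x ∂μ) / 2 - (∫ x, cos (2 * u x) * f x ∂μ) / 2 := by
  have hcos : Integrable (fun x => cos (2 * u x) * f x) μ :=
    hf.bdd_mul (continuous_cos.comp_aestronglyMeasurable (hu.const_mul 2))
      (ae_of_all _ fun x => abs_cos_le_one _)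
  rw [← integral_div, ← integral_div, ← integral_sub (hf.div_const 2) (hcos.div_const 2)]
  congr with x
  rw [sin_sq_eq_half_sub]
  ring

theorem integral_rpow_mul_exp_neg_mul_sq_Ioi {b : ℝ} (hb : 0 < b) {q : ℝ} (hq : -1 < q) :
    ∫ x in Ioi 0, x ^ q * exp (-(b * x ^ 2)) =
      b ^ (-(q + 1) / 2) * ∫ θ in Ioi 0, exp (-θ ^ 2) * θ ^ q := by
  have h := integral_rpow_mul_exp_neg_mul_rpow two_pos hq hb
  have h1 := integral_rpow_mul_exp_neg_mul_rpow two_pos hq one_pos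
  simp only [rpow_two, neg_mul, one_mul, one_rpow] at h h1
  simp_rw [mul_comm (exp _)]
  rw [h, h1]
  ring

theorem integral_comp_mul_norm {E F : Type*} [NormedAddCommGroup E] [NormedSpace ℝ E]
    [FiniteDimensional ℝ E] [MeasurableSpace E] [BorelSpace E] [NormedAddCommGroup F]
    [NormedSpace ℝ F] (μ : Measure E) [μ.IsAddHaarMeasure] (f : ℝ → F) {R : ℝ} (hR : 0 ≤ R) :
    ∫ x, f (R * ‖x‖) ∂μ = (R ^ finrank ℝ E)⁻¹ • ∫ x, f ‖x‖ ∂μ := by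
  simpa only [norm_smul, norm_of_nonneg hR] using
    Measure.integral_comp_smul_of_nonneg μ (fun x => f ‖x‖) R (hR := hR)

theorem sqrt_pow_eq_rpow {t : ℝ} (ht : 0 ≤ t) (n : ℕ) : √t ^ n = t ^ ((n : ℝ) / 2) := by
  rw [sqrt_eq_rpow, ← rpow_natCast, ← rpow_mul ht, one_div_mul_eq_div]

theorem rpow_mul_integral_exp_mul_sin_sq {n : ℕ} (hn : 0 < n) (c γ : ℝ) {t : ℝ} (ht : 0 < t) :
    t ^ ((n : ℝ) / 2) * ∫ ξ : Esp n, exp (-(c * ‖ξ‖ ^ 2 * t)) * sin (γ * t * ‖ξ‖) ^ 2 =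
      sphereSurface n * ∫ r in Ioi 0, r ^ (n - 1) * exp (-(c * r ^ 2)) * sin (γ * √t * r) ^ 2 := by
  have hrescale : ∀ ξ : Esp n, exp (-(c * ‖ξ‖ ^ 2 * t)) * sin (γ * t * ‖ξ‖) ^ 2 =
      exp (-(c * (√t * ‖ξ‖) ^ 2)) * sin (γ * √t * (√t * ‖ξ‖)) ^ 2 := by
    intro ξ
    have hsq : √t * √t = t := mul_self_sqrt ht.le
    congr 3
    · linear_combination (-(c * ‖ξ‖ ^ 2)) * hsq
    · linear_combination (-(γ * ‖ξ‖)) * hsq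
  have : Nontrivial (Esp n) :=
    Module.nontrivial_of_finrank_pos (by rwa [finrank_euclideanSpace_fin])
  simp_rw [hrescale]
  rw [integral_comp_mul_norm volume (fun r => exp (-(c * r ^ 2)) * sin (γ * √t * r) ^ 2)
      (sqrt_nonneg t), finrank_euclideanSpace_fin, sqrt_pow_eq_rpow ht.le, smul_eq_mul,
    mul_inv_cancel_left₀ (rpow_pos_of_pos ht _).ne',
    integral_fun_norm_addHaar volume (fun r => exp (-(c * r ^ 2)) * sin (γ * √t * r) ^ 2),
    finrank_euclideanSpace_fin, sphereSurface, measureReal_def, nsmul_eq_mul, smul_eq_mul]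
  simp_rw [smul_eq_mul, mul_assoc]

/-- `t^{n/2} ∫ e^{-(α+β)|ξ|²t} sin²(γt|ξ|) dξ → (σ_{n-1}/2)(α+β)^{-n/2} S₀`
as `t → ∞`, where `S₀ = ∫_0^∞ e^{-θ²} θ^{n-1} dθ`. -/
theorem stmt14
    (n : ℕ) (hn : 1 ≤ n) (α β γ : ℝ) (hα : 0 < α) (hβ : 0 ≤ β) (hγ : 0 < γ) :
    Filter.Tendsto
      (fun t : ℝ => t ^ ((n : ℝ) / 2) *
        ∫ ξ : Esp n, Real.exp (-((α + β) * ‖ξ‖ ^ 2 * t)) * Real.sin (γ * t * ‖ξ‖) ^ 2)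
      Filter.atTop
      (nhds ((sphereSurface n / 2) * (α + β) ^ (-(n : ℝ) / 2)
        * ∫ θ in Set.Ioi (0 : ℝ), Real.exp (-θ ^ 2) * θ ^ (n - 1))) := by
  have hc : 0 < α + β := by linarith
  have hq : (-1 : ℝ) < (n - 1 : ℕ) := neg_one_lt_zero.trans_le (Nat.cast_nonneg _)
  have hint : IntegrableOn (fun r => r ^ (n - 1) * exp (-((α + β) * r ^ 2))) (Ioi 0) := by
    simpa only [rpow_natCast, neg_mul] using integrableOn_rpow_mul_exp_neg_mul_sq hc hq
  set A := ∫ r in Ioi 0, r ^ (n - 1) * exp (-((α + β) * r ^ 2))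
  have hmoment : A = (α + β) ^ (-(n : ℝ) / 2) * ∫ θ in Ioi 0, exp (-θ ^ 2) * θ ^ (n - 1) := by
    have hn' : ((n - 1 : ℕ) : ℝ) + 1 = n := by rw [Nat.cast_sub hn]; ring
    simpa only [rpow_natCast, hn'] using integral_rpow_mul_exp_neg_mul_sq_Ioi hc hq
  have hfreq : Tendsto (fun t : ℝ => 2 * (γ * √t)) atTop atTop :=
    (tendsto_sqrt_atTop.const_mul_atTop hγ).const_mul_atTop two_pos
  have hosc := (tendsto_setIntegral_cos_mul_atTop measurableSet_Ioi hint).comp hfreq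
  have hlim :=
    (((tendsto_const_nhds (x := A)).div_const 2).sub (hosc.div_const 2)).const_mul (sphereSurface n)
  rw [zero_div, sub_zero] at hlim
  refine (hlim.congr' ?_).trans_eq (congrArg 𝓝 (by rw [hmoment]; ring))
  filter_upwards [eventually_gt_atTop 0] with t ht
  rw [rpow_mul_integral_exp_mul_sin_sq (by omega) _ γ ht, integral_mul_sin_sq hint _ (by fun_prop)]
  simp only [Function.comp_apply, mul_assoc, A]
end
end
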